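/- Under the exponential prime counting asymptotics, ln ζ_{G_k}(σ) = ρ Γ(1+γ) (σ−1)^{−1−γ} (1 + o(1)) as σ ↓ 1. -/

import Mathlib

open Filter Real Asymptotics Topology

/-- An additive arithmetical semigroup: a commutative monoid with a countable
set of primes, unique factorization into prime powers, and a degree map. -/
structure ArithSemigroup (M : Type) [CommMonoid M] where
  P : Set M
  countable_P : P.Countable
  deg : M → ℝ
  deg_one : deg 1 = 0
  deg_pos : ∀ p ∈ P, 0 < deg p
  deg_mul : ∀ a b : M, deg (a * b) = deg a + deg b
  finite_le : ∀ x : ℝ, {a : M | deg a ≤ x}.Finite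
  factor : ∀ a : M, ∃! n : P →₀ ℕ, a = n.prod fun p e => (p : M) ^ e

/-- `a` is `k`-th power-free: no divisor of the form `b ^ k` with `b ≠ 1`. -/
def ArithSemigroup.PowerFree {M : Type} [CommMonoid M] (_S : ArithSemigroup M)
    (k : ℕ) (a : M) : Prop :=
  ∀ b : M, b ≠ 1 → ¬ (b ^ k ∣ a)

/-- Counting function of `k`-th power-free elements of degree `≤ x`. -/
noncomputable def countPF {M : Type} [CommMonoid M] (S : ArithSemigroup M)
    (k : ℕ) (x : ℝ) : ℕ :=
  Nat.card {a : M | S.PowerFree k a ∧ S.deg a ≤ x}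

/-- Counting function of all elements of degree `≤ x`. -/
noncomputable def countAll {M : Type} [CommMonoid M] (S : ArithSemigroup M)
    (x : ℝ) : ℕ :=
  Nat.card {a : M | S.deg a ≤ x}

/-- Prime counting function. -/
noncomputable def primeCount {M : Type} [CommMonoid M] (S : ArithSemigroup M)
    (x : ℝ) : ℕ :=
  Nat.card {p : M | p ∈ S.P ∧ S.deg p ≤ x}

/-- The zeta function of the `k`-th power-free elements (real argument). -/
noncomputable def zetaPF {M : Type} [CommMonoid M] (S : ArithSemigroup M)
    (k : ℕ) (s : ℝ) : ℝ :=
  ∑' a : {a : M // S.PowerFree k a}, Real.exp (-s * S.deg a.1)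

/-- The zeta function of `G` (real argument). -/
noncomputable def zetaAll {M : Type} [CommMonoid M] (S : ArithSemigroup M)
    (s : ℝ) : ℝ :=
  ∑' a : M, Real.exp (-s * S.deg a)

/-- The exponential prime counting asymptotics
`π_G^#(x) = ρ x^γ e^x (1 + O(x^{-δ}))` as `x → ∞`. -/
def PrimeAsymp {M : Type} [CommMonoid M] (S : ArithSemigroup M)
    (ρ γ δ : ℝ) : Prop :=
  (fun x : ℝ => (primeCount S x : ℝ) - ρ * x ^ γ * Real.exp x) =O[atTop]
    fun x : ℝ => x ^ (γ - δ) * Real.exp x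

/-!
Unique factorization identifies the `k`-th power-free elements with the exponent vectors
bounded by `k`, so `ζ_{G_k}(σ)` is the Euler product `∏_p (1 + u_p + ⋯ + u_p^{k-1})` with
`u_p = e^{-σ∂(p)}`. Comparing each factor with `exp u_p` gives
`log ζ_{G_k}(σ) = ∑_p u_p + O(∑_p u_p²) = ∑_p u_p + O(1)` as `σ ↓ 1`.
Abel summation turns `∑_p u_p` into `σ ∫_0^∞ π(x) e^{-σx} dx`, and inserting
`π(x) = ρ x^γ e^x + O(x^{γ-δ} e^x)` evaluates it as
`ρ Γ(1+γ) (σ-1)^{-1-γ} + O((σ-1)^{δ-1-γ}) + O(1)`.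
-/

lemma exp_sub_sq_le_one_add {u : ℝ} (hu : 0 ≤ u) : exp (u - u ^ 2) ≤ 1 + u := by
  -- `exp (u ^ 2 - u) ≥ 1 - u + u ^ 2` and `(1 + u) * (1 - u + u ^ 2) = 1 + u ^ 3 ≥ 1`
  have h := add_one_le_exp (u ^ 2 - u)
  have hmul : exp (u - u ^ 2) * exp (u ^ 2 - u) = 1 := by rw [← exp_add]; simp
  nlinarith [exp_pos (u - u ^ 2), mul_le_mul_of_nonneg_left h (exp_pos (u - u ^ 2)).le,
    pow_nonneg hu 3]

lemma one_add_le_sum_range_pow {k : ℕ} (hk : 2 ≤ k) {u : ℝ} (hu : 0 ≤ u) :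
    1 + u ≤ ∑ e ∈ Finset.range k, u ^ e := by
  rw [← Finset.sum_range_add_sum_Ico _ hk]
  simpa [Finset.sum_range_succ] using Finset.sum_nonneg fun e _ => pow_nonneg hu e

lemma sum_range_pow_le_exp {k : ℕ} (hk : 2 ≤ k) {u : ℝ} (hu0 : 0 ≤ u) (hu1 : u ≤ 1) :
    ∑ e ∈ Finset.range k, u ^ e ≤ exp (u + (k - 2) * u ^ 2) := by
  have htail : ∑ e ∈ Finset.Ico 2 k, u ^ e ≤ (k - 2) * u ^ 2 := by
    have := Finset.sum_le_card_nsmul (Finset.Ico 2 k) (u ^ ·) (u ^ 2) fun e he =>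
      pow_le_pow_of_le_one hu0 hu1 (Finset.mem_Ico.mp he).1
    rwa [Nat.card_Ico, nsmul_eq_mul, Nat.cast_sub hk, Nat.cast_ofNat] at this
  have := add_one_le_exp (u + (k - 2) * u ^ 2)
  rw [← Finset.sum_range_add_sum_Ico _ hk]
  simp only [Finset.sum_range_succ, Finset.sum_range_zero, pow_zero, pow_one, zero_add]
  linarith

section TruncatedEulerProduct

variable {ι : Type*} {u : ι → ℝ} {k : ℕ}

lemma sum_finsupp_prod_pow (s : Finset ι) :
    ∑ n ∈ s.finsupp (fun _ => Finset.range k), (n.prod fun i e => u i ^ e) =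
      ∏ i ∈ s, ∑ e ∈ Finset.range k, u i ^ e := by
  classical
  rw [Finset.prod_sum, Finset.finsupp, Finset.sum_map]
  refine Finset.sum_congr rfl fun g _ => ?_
  simp only [Function.Embedding.coeFn_mk]
  rw [Finsupp.prod_of_support_subset _ (Finsupp.support_indicator_subset _ _) _
    fun _ _ => pow_zero _, ← Finset.prod_attach]
  exact Finset.prod_congr rfl fun i _ => by rw [Finsupp.indicator_of_mem i.2]

lemma lt_of_mem_finsupp_range (hk : 0 < k) {s : Finset ι} {n : ι →₀ ℕ}
    (hn : n ∈ s.finsupp fun _ => Finset.range k) (i : ι) : n i < k := by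
  obtain ⟨hsupp, hval⟩ := Finset.mem_finsupp_iff.mp hn
  by_cases hi : i ∈ s
  · exact Finset.mem_range.mp (hval i hi)
  · rwa [Finsupp.notMem_support_iff.mp fun h => hi (hsupp h)]

variable (hu0 : ∀ i, 0 ≤ u i) (hu1 : ∀ i, u i ≤ 1) (hu : Summable u)
include hu0 hu1 hu

lemma summable_sq_of_le_one : Summable fun i => u i ^ 2 :=
  hu.of_nonneg_of_le (fun i => sq_nonneg _) fun i => by nlinarith [hu0 i, hu1 i]

lemma sum_finsupp_prod_pow_le (hk : 2 ≤ k) (F : Finset {n : ι →₀ ℕ // ∀ i, n i < k}) :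
    ∑ n ∈ F, (n.1.prod fun i e => u i ^ e) ≤
      exp (∑' i, u i + (k - 2) * ∑' i, u i ^ 2) := by
  classical
  let Q := F.biUnion fun n => n.1.support
  have hsub : F ⊆ (Q.finsupp fun _ => Finset.range k).subtype fun n => ∀ i, n i < k :=
    fun n hn => Finset.mem_subtype.mpr <| Finset.mem_finsupp_iff.mpr
      ⟨fun i hi => Finset.mem_biUnion.mpr ⟨n, hn, hi⟩, fun i _ => Finset.mem_range.mpr (n.2 i)⟩
  have hk2 : (0 : ℝ) ≤ k - 2 := by rw [sub_nonneg]; exact_mod_cast hk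
  calc ∑ n ∈ F, (n.1.prod fun i e => u i ^ e)
      ≤ ∑ n ∈ (Q.finsupp fun _ => Finset.range k).subtype (fun n => ∀ i, n i < k),
          n.1.prod fun i e => u i ^ e :=
        Finset.sum_le_sum_of_subset_of_nonneg hsub fun _ _ _ =>
          Finset.prod_nonneg fun i _ => pow_nonneg (hu0 i) _
    _ = ∑ n ∈ Q.finsupp (fun _ => Finset.range k), n.prod fun i e => u i ^ e :=
        Finset.sum_subtype_of_mem (fun n => n.prod fun i e => u i ^ e)
          fun _ hn => lt_of_mem_finsupp_range (by omega) hn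
    _ = ∏ i ∈ Q, ∑ e ∈ Finset.range k, u i ^ e := sum_finsupp_prod_pow Q
    _ ≤ ∏ i ∈ Q, exp (u i + (k - 2) * u i ^ 2) :=
        Finset.prod_le_prod (fun i _ => Finset.sum_nonneg fun e _ => pow_nonneg (hu0 i) e)
          fun i _ => sum_range_pow_le_exp hk (hu0 i) (hu1 i)
    _ = exp (∑ i ∈ Q, u i + (k - 2) * ∑ i ∈ Q, u i ^ 2) := by
        rw [← exp_sum, Finset.sum_add_distrib, Finset.mul_sum]
    _ ≤ exp (∑' i, u i + (k - 2) * ∑' i, u i ^ 2) := by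
        gcongr
        · exact hu.sum_le_tsum Q fun i _ => hu0 i
        · exact (summable_sq_of_le_one hu0 hu1 hu).sum_le_tsum Q fun i _ => sq_nonneg _

lemma summable_finsupp_prod_pow (hk : 2 ≤ k) :
    Summable fun n : {n : ι →₀ ℕ // ∀ i, n i < k} => n.1.prod fun i e => u i ^ e :=
  summable_of_sum_le (fun _ => Finset.prod_nonneg fun i _ => pow_nonneg (hu0 i) _)
    (sum_finsupp_prod_pow_le hu0 hu1 hu hk)

lemma exp_sum_sub_le_tsum_finsupp_prod_pow (hk : 2 ≤ k) (Q : Finset ι) :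
    exp (∑ i ∈ Q, u i - ∑' i, u i ^ 2) ≤
      ∑' n : {n : ι →₀ ℕ // ∀ i, n i < k}, n.1.prod fun i e => u i ^ e := by
  classical
  calc exp (∑ i ∈ Q, u i - ∑' i, u i ^ 2)
      ≤ exp (∑ i ∈ Q, (u i - u i ^ 2)) := by
        rw [Finset.sum_sub_distrib]
        gcongr
        exact (summable_sq_of_le_one hu0 hu1 hu).sum_le_tsum Q fun i _ => sq_nonneg _
    _ = ∏ i ∈ Q, exp (u i - u i ^ 2) := exp_sum _ _
    _ ≤ ∏ i ∈ Q, ∑ e ∈ Finset.range k, u i ^ e :=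
        Finset.prod_le_prod (fun i _ => (exp_pos _).le) fun i _ =>
          (exp_sub_sq_le_one_add (hu0 i)).trans (one_add_le_sum_range_pow hk (hu0 i))
    _ = ∑ n ∈ (Q.finsupp fun _ => Finset.range k).subtype (fun n => ∀ i, n i < k),
          n.1.prod fun i e => u i ^ e := by
        rw [Finset.sum_subtype_of_mem (fun n => n.prod fun i e => u i ^ e)
          fun _ hn => lt_of_mem_finsupp_range (by omega) hn, sum_finsupp_prod_pow]
    _ ≤ _ := (summable_finsupp_prod_pow hu0 hu1 hu hk).sum_le_tsum _ fun n _ =>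
        Finset.prod_nonneg fun i _ => pow_nonneg (hu0 i) _

theorem abs_log_tsum_finsupp_prod_pow_sub_le (hk : 2 ≤ k) :
    |log (∑' n : {n : ι →₀ ℕ // ∀ i, n i < k}, n.1.prod fun i e => u i ^ e) - ∑' i, u i| ≤
      k * ∑' i, u i ^ 2 := by
  set Z := ∑' n : {n : ι →₀ ℕ // ∀ i, n i < k}, n.1.prod fun i e => u i ^ e
  have hsq : 0 ≤ ∑' i, u i ^ 2 := tsum_nonneg fun i => sq_nonneg _
  have hZ : 0 < Z :=
    (exp_pos _).trans_le (exp_sum_sub_le_tsum_finsupp_prod_pow hu0 hu1 hu hk ∅)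
  have hupper : log Z ≤ ∑' i, u i + (k - 2) * ∑' i, u i ^ 2 :=
    (log_le_iff_le_exp hZ).mpr <| (summable_finsupp_prod_pow hu0 hu1 hu hk).tsum_le_of_sum_le
      (sum_finsupp_prod_pow_le hu0 hu1 hu hk)
  have hlower : ∑' i, u i ≤ log Z + ∑' i, u i ^ 2 :=
    hu.tsum_le_of_sum_le fun Q => by
      have := (le_log_iff_exp_le hZ).mpr (exp_sum_sub_le_tsum_finsupp_prod_pow hu0 hu1 hu hk Q)
      linarith
  rw [abs_le]
  constructor <;> nlinarith

end TruncatedEulerProduct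

section GammaIntegral

open MeasureTheory Set

lemma integrableOn_rpow_mul_exp_neg_mul {s b : ℝ} (hs : -1 < s) (hb : 0 < b) :
    IntegrableOn (fun x => x ^ s * exp (-b * x)) (Ioi 0) := by
  simpa only [rpow_one] using integrableOn_rpow_mul_exp_neg_mul_rpow hs one_pos hb

lemma integral_rpow_mul_exp_neg_mul {s b : ℝ} (hs : -1 < s) (hb : 0 < b) :
    ∫ x in Ioi 0, x ^ s * exp (-b * x) = Gamma (1 + s) * b ^ (-1 - s) := by
  have h := integral_rpow_mul_exp_neg_mul_Ioi (a := 1 + s) (by linarith) hb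
  simp only [add_sub_cancel_left, ← neg_mul] at h
  rw [h, one_div, inv_rpow hb.le, ← rpow_neg hb.le, neg_add', mul_comm]

lemma lintegral_Ioi_mul_exp_neg_mul {σ : ℝ} (hσ : 0 < σ) (d : ℝ) :
    ∫⁻ x in Ioi d, ENNReal.ofReal (σ * exp (-σ * x)) = ENNReal.ofReal (exp (-σ * d)) := by
  rw [← ofReal_integral_eq_lintegral_ofReal
    ((integrableOn_exp_mul_Ioi (neg_lt_zero.mpr hσ) d).const_mul σ)
    (ae_of_all _ fun x => by positivity), integral_const_mul,
    integral_exp_mul_Ioi (neg_lt_zero.mpr hσ)]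
  congr 1
  field_simp

end GammaIntegral

lemma isLittleO_sub_one_rpow {a b : ℝ} (hba : b < a) :
    (fun σ : ℝ => (σ - 1) ^ a) =o[𝓝[>] 1] fun σ => (σ - 1) ^ b := by
  have hsub : Tendsto (fun σ : ℝ => σ - 1) (𝓝[>] 1) (𝓝[>] 0) :=
    tendsto_nhdsWithin_iff.mpr
      ⟨(tendsto_nhdsWithin_of_tendsto_nhds (continuous_sub_right (1 : ℝ)).continuousAt).trans
        (by simp), eventually_nhdsWithin_of_forall fun _ hσ => Set.mem_Ioi.mpr (sub_pos.mpr hσ)⟩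
  have hpow : (fun t : ℝ => t ^ (a - b)) =o[𝓝[>] 0] fun _ => (1 : ℝ) := by
    refine (isLittleO_one_iff ℝ).mpr ?_
    simpa [zero_rpow (sub_pos.mpr hba).ne'] using
      ((continuousAt_rpow_const 0 _ (Or.inr (sub_pos.mpr hba).le)).tendsto).mono_left
        nhdsWithin_le_nhds
  refine ((hpow.mul_isBigO (isBigO_refl (fun t : ℝ => t ^ b) _)).comp_tendsto hsub).congr'
    ?_ (Eventually.of_forall fun σ => one_mul _)
  filter_upwards [self_mem_nhdsWithin] with σ hσ
  simp only [Function.comp_apply]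
  rw [← rpow_add (sub_pos.mpr hσ), sub_add_cancel]

namespace ArithSemigroup

open MeasureTheory Set
open scoped ENNReal

variable {M : Type} [CommMonoid M] (S : ArithSemigroup M)

noncomputable def primeProd (n : S.P →₀ ℕ) : M := n.prod fun p e => (p : M) ^ e

lemma primeProd_zero : S.primeProd 0 = 1 := Finsupp.prod_zero_index

lemma primeProd_add (m n : S.P →₀ ℕ) :
    S.primeProd (m + n) = S.primeProd m * S.primeProd n :=
  Finsupp.prod_add_index' (fun _ => pow_zero _) (fun _ => pow_add _)

lemma primeProd_single (p : S.P) (e : ℕ) : S.primeProd (Finsupp.single p e) = (p : M) ^ e :=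
  Finsupp.prod_single_index (pow_zero _)

noncomputable def factorization (a : M) : S.P →₀ ℕ := (S.factor a).exists.choose

lemma primeProd_factorization (a : M) : S.primeProd (S.factorization a) = a :=
  (S.factor a).exists.choose_spec.symm

lemma factorization_primeProd (n : S.P →₀ ℕ) : S.factorization (S.primeProd n) = n :=
  (S.factor _).unique (S.primeProd_factorization _).symm rfl

lemma factorization_one : S.factorization 1 = 0 := by
  rw [← S.primeProd_zero, factorization_primeProd]

lemma factorization_mul (a b : M) :
    S.factorization (a * b) = S.factorization a + S.factorization b := by
  conv_lhs => rw [← S.primeProd_factorization a, ← S.primeProd_factorization b,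
    ← primeProd_add, factorization_primeProd]

lemma factorization_pow (a : M) (k : ℕ) : S.factorization (a ^ k) = k • S.factorization a := by
  induction k with
  | zero => simp [factorization_one]
  | succ k ih => rw [pow_succ, factorization_mul, ih, succ_nsmul]

lemma factorization_eq_zero_iff {a : M} : S.factorization a = 0 ↔ a = 1 := by
  refine ⟨fun h => ?_, fun h => h ▸ S.factorization_one⟩
  rw [← S.primeProd_factorization a, h, primeProd_zero]

lemma prime_ne_one (p : S.P) : (p : M) ≠ 1 := fun h =>
  (S.deg_pos p p.2).ne' (h ▸ S.deg_one)

lemma powerFree_iff_factorization_lt {k : ℕ} {a : M} :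
    S.PowerFree k a ↔ ∀ p, S.factorization a p < k := by
  constructor
  · intro ha p
    by_contra! hkp
    refine ha p (S.prime_ne_one p) ⟨S.primeProd (S.factorization a - Finsupp.single p k), ?_⟩
    have hle : Finsupp.single p k ≤ S.factorization a := Finsupp.single_le_iff.mpr hkp
    rw [← primeProd_single, ← primeProd_add, add_tsub_cancel_of_le hle, primeProd_factorization]
  · rintro ha b hb ⟨c, rfl⟩
    obtain ⟨p, hp⟩ := Finsupp.ne_iff.mp ((S.factorization_eq_zero_iff).not.mpr hb)
    have := ha p
    rw [factorization_mul, factorization_pow] at this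
    simp only [Finsupp.coe_add, Finsupp.coe_smul, Pi.add_apply, Pi.smul_apply, smul_eq_mul,
      Finsupp.coe_zero, Pi.zero_apply] at this hp
    nlinarith [Nat.one_le_iff_ne_zero.mpr hp]

noncomputable def powerFreeEquiv (k : ℕ) :
    {a : M // S.PowerFree k a} ≃ {n : S.P →₀ ℕ // ∀ p, n p < k} where
  toFun a := ⟨S.factorization a, S.powerFree_iff_factorization_lt.mp a.2⟩
  invFun n := ⟨S.primeProd n, S.powerFree_iff_factorization_lt.mpr <| by
    simpa only [factorization_primeProd] using n.2⟩
  left_inv a := Subtype.ext (S.primeProd_factorization a)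
  right_inv n := Subtype.ext (S.factorization_primeProd n)

@[simps]
noncomputable def expDeg (σ : ℝ) : M →* ℝ where
  toFun a := exp (-σ * S.deg a)
  map_one' := by simp [S.deg_one]
  map_mul' a b := by simp [S.deg_mul, mul_add, exp_add]

lemma exp_deg_eq_prod (σ : ℝ) (a : M) :
    exp (-σ * S.deg a) = (S.factorization a).prod fun p e => exp (-σ * S.deg p) ^ e := by
  have h := map_finsuppProd (S.expDeg σ) (S.factorization a) fun p e => (p : M) ^ e
  rw [← primeProd, primeProd_factorization] at h
  simpa only [map_pow, expDeg_apply] using h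

lemma zetaPF_eq_tsum (k : ℕ) (σ : ℝ) :
    zetaPF S k σ = ∑' n : {n : S.P →₀ ℕ // ∀ p, n p < k},
      n.1.prod fun p e => exp (-σ * S.deg p) ^ e := by
  rw [zetaPF, ← (S.powerFreeEquiv k).symm.tsum_eq]
  refine tsum_congr fun n => ?_
  rw [exp_deg_eq_prod]
  simp [powerFreeEquiv, factorization_primeProd]

noncomputable def primeZeta (σ : ℝ) : ℝ := ∑' p : S.P, exp (-σ * S.deg p)

lemma abs_log_zetaPF_sub_primeZeta_le {k : ℕ} (hk : 2 ≤ k) {σ : ℝ} (hσ : 0 ≤ σ)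
    (hsum : Summable fun p : S.P => exp (-σ * S.deg p)) :
    |log (zetaPF S k σ) - S.primeZeta σ| ≤ k * ∑' p : S.P, exp (-σ * S.deg p) ^ 2 := by
  rw [zetaPF_eq_tsum]
  exact abs_log_tsum_finsupp_prod_pow_sub_le (fun _ => (exp_pos _).le)
    (fun p => exp_le_one_iff.mpr (by nlinarith [S.deg_pos p p.2])) hsum hk

lemma isBigO_log_zetaPF_sub_primeZeta {k : ℕ} (hk : 2 ≤ k)
    (hsum : ∀ σ, 1 < σ → Summable fun p : S.P => exp (-σ * S.deg p)) :
    (fun σ => log (zetaPF S k σ) - S.primeZeta σ) =O[𝓝[>] 1] fun _ => (1 : ℝ) := by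
  refine IsBigO.of_bound (k * S.primeZeta 2) ?_
  filter_upwards [self_mem_nhdsWithin] with σ (hσ : 1 < σ)
  have hsq (p : S.P) : exp (-σ * S.deg p) ^ 2 ≤ exp (-2 * S.deg p) := by
    rw [sq, ← exp_add, exp_le_exp]
    nlinarith [S.deg_pos p p.2]
  rw [norm_one, mul_one, norm_eq_abs]
  refine (S.abs_log_zetaPF_sub_primeZeta_le hk (by linarith) (hsum σ hσ)).trans ?_
  gcongr
  exact ((hsum 2 one_lt_two).of_nonneg_of_le (fun _ => sq_nonneg _) hsq).tsum_le_tsum hsq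
    (hsum 2 one_lt_two)

lemma primeCount_mono : Monotone fun x => (primeCount S x : ℝ) := by
  intro x y hxy
  simp only [primeCount, Nat.card_coe_set_eq, Nat.cast_le]
  exact Set.ncard_le_ncard (fun p hp => ⟨hp.1, hp.2.trans hxy⟩)
    ((S.finite_le y).subset fun p hp => hp.2)

lemma tsum_indicator_deg_le (x : ℝ) :
    ∑' p : S.P, {p : S.P | S.deg p ≤ x}.indicator 1 p = (primeCount S x : ℝ≥0∞) := by
  have hfin : {p : S.P | S.deg p ≤ x}.Finite :=
    (S.finite_le x).preimage Subtype.val_injective.injOn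
  have hcard : Nat.card {p : S.P | S.deg p ≤ x} = primeCount S x :=
    Nat.card_congr ⟨fun p => ⟨p.1.1, p.1.2, p.2⟩, fun p => ⟨⟨p.1, p.2.1⟩, p.2.2⟩,
      fun _ => rfl, fun _ => rfl⟩
  rw [← tsum_subtype, Pi.one_def, ENNReal.tsum_set_one, ← hfin.cast_ncard_eq,
    ← Nat.card_coe_set_eq, hcard]
  rfl

lemma tsum_exp_deg_eq_lintegral {σ : ℝ} (hσ : 0 < σ) :
    ∑' p : S.P, ENNReal.ofReal (exp (-σ * S.deg p)) =
      ENNReal.ofReal σ * ∫⁻ x in Ioi 0, primeCount S x * ENNReal.ofReal (exp (-σ * x)) := by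
  have := S.countable_P.to_subtype
  set f : ℝ → ℝ≥0∞ := fun x => ENNReal.ofReal (σ * exp (-σ * x))
  have hterm (p : S.P) :
      ENNReal.ofReal (exp (-σ * S.deg p)) = ∫⁻ x in Ioi 0, (Ici (S.deg p)).indicator f x := by
    rw [lintegral_indicator measurableSet_Ici, Measure.restrict_restrict measurableSet_Ici,
      inter_eq_left.mpr (Ici_subset_Ioi.mpr (S.deg_pos p p.2)), ← restrict_Ioi_eq_restrict_Ici,
      lintegral_Ioi_mul_exp_neg_mul hσ]
  have hf : Measurable f := by fun_prop
  calc ∑' p : S.P, ENNReal.ofReal (exp (-σ * S.deg p))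
      = ∫⁻ x in Ioi 0, ∑' p : S.P, (Ici (S.deg p)).indicator f x := by
        simp_rw [hterm]
        exact (lintegral_tsum fun p => (hf.indicator measurableSet_Ici).aemeasurable).symm
    _ = ∫⁻ x in Ioi 0, ENNReal.ofReal σ * (primeCount S x * ENNReal.ofReal (exp (-σ * x))) := by
        refine lintegral_congr fun x => ?_
        have (p : S.P) :
            (Ici (S.deg p)).indicator f x = {p : S.P | S.deg p ≤ x}.indicator 1 p * f x := by
          by_cases h : S.deg p ≤ x <;> simp [h]
        rw [tsum_congr this, ENNReal.tsum_mul_right, tsum_indicator_deg_le]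
        simp only [f, ENNReal.ofReal_mul hσ.le]
        ring
    _ = _ := lintegral_const_mul' _ _ ENNReal.ofReal_ne_top

lemma hasSum_exp_deg {σ : ℝ} (hσ : 0 < σ)
    (hint : IntegrableOn (fun x => (primeCount S x : ℝ) * exp (-σ * x)) (Ioi 0)) :
    HasSum (fun p : S.P => exp (-σ * S.deg p))
      (σ * ∫ x in Ioi 0, (primeCount S x : ℝ) * exp (-σ * x)) := by
  have hI : ENNReal.ofReal (∫ x in Ioi 0, (primeCount S x : ℝ) * exp (-σ * x)) =
      ∫⁻ x in Ioi 0, primeCount S x * ENNReal.ofReal (exp (-σ * x)) := by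
    rw [ofReal_integral_eq_lintegral_ofReal hint (ae_of_all _ fun x => by positivity)]
    refine lintegral_congr fun x => ?_
    rw [ENNReal.ofReal_mul (Nat.cast_nonneg _), ENNReal.ofReal_natCast]
  have hsum := S.tsum_exp_deg_eq_lintegral hσ
  rw [← hI, ← ENNReal.ofReal_mul hσ.le] at hsum
  have h := ENNReal.hasSum_toReal (hsum ▸ ENNReal.ofReal_ne_top)
  rw [← ENNReal.tsum_toReal_eq fun _ => ENNReal.ofReal_ne_top, hsum,
    ENNReal.toReal_ofReal (mul_nonneg hσ.le (setIntegral_nonneg measurableSet_Ioi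
      fun x _ => by positivity))] at h
  simpa only [ENNReal.toReal_ofReal (exp_pos _).le] using h

section PrimeCountBound

variable {ρ γ β C X₀ : ℝ}
  (hbd : ∀ x, X₀ ≤ x → |(primeCount S x : ℝ) - ρ * x ^ γ * exp x| ≤ C * x ^ β * exp x)
include hbd

lemma primeCount_le_of_bound (hρ : 0 ≤ ρ) (hC : 0 ≤ C) {x : ℝ} (hx : 0 ≤ x) :
    (primeCount S x : ℝ) ≤ primeCount S X₀ + (ρ * x ^ γ + C * x ^ β) * exp x := by
  rcases le_or_gt x X₀ with hxX | hxX
  · have := S.primeCount_mono hxX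
    have : 0 ≤ (ρ * x ^ γ + C * x ^ β) * exp x := by positivity
    linarith
  · have := (abs_le.mp (hbd x hxX.le)).2
    have : (0 : ℝ) ≤ primeCount S X₀ := Nat.cast_nonneg _
    linarith

lemma integrableOn_primeCount_mul_exp (hγ : -1 < γ) (hβ : -1 < β) (hρ : 0 ≤ ρ) (hC : 0 ≤ C)
    {σ : ℝ} (hσ : 1 < σ) :
    IntegrableOn (fun x => (primeCount S x : ℝ) * exp (-σ * x)) (Ioi 0) := by
  have hσ1 : 0 < σ - 1 := sub_pos.mpr hσ
  have hdom : IntegrableOn (fun x => primeCount S X₀ * exp (-σ * x) +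
      (ρ * (x ^ γ * exp (-(σ - 1) * x)) + C * (x ^ β * exp (-(σ - 1) * x)))) (Ioi 0) :=
    ((integrableOn_exp_mul_Ioi (by linarith) 0).const_mul _).add
      (((integrableOn_rpow_mul_exp_neg_mul hγ hσ1).const_mul ρ).add
        ((integrableOn_rpow_mul_exp_neg_mul hβ hσ1).const_mul C))
  refine hdom.mono' ((S.primeCount_mono.measurable.mul (by fun_prop)).aestronglyMeasurable) ?_
  filter_upwards [ae_restrict_mem measurableSet_Ioi] with x (hx : 0 < x)
  have hexp : exp x * exp (-σ * x) = exp (-(σ - 1) * x) := by rw [← exp_add]; ring_nf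
  rw [norm_of_nonneg (by positivity)]
  calc (primeCount S x : ℝ) * exp (-σ * x)
      ≤ (primeCount S X₀ + (ρ * x ^ γ + C * x ^ β) * exp x) * exp (-σ * x) := by
        gcongr
        exact S.primeCount_le_of_bound hbd hρ hC hx.le
    _ = _ := by rw [add_mul, mul_assoc, hexp]; ring

lemma exists_abs_integral_sub_le (hγ : -1 < γ) (hβ : -1 < β) (hρ : 0 ≤ ρ) (hC : 0 ≤ C)
    (hX₀ : 0 ≤ X₀) : ∃ K, ∀ σ, 1 < σ →
      |(∫ x in Ioi 0, (primeCount S x : ℝ) * exp (-σ * x)) -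
          ρ * (Gamma (1 + γ) * (σ - 1) ^ (-1 - γ))| ≤
        K + C * (Gamma (1 + β) * (σ - 1) ^ (-1 - β)) := by
  -- on `(0, X₀]` only the monotonicity of `π` is used, and that part contributes a constant
  set g : ℝ → ℝ := (Ioc 0 X₀).indicator fun x => primeCount S X₀ + ρ * x ^ γ with hg
  have hint : IntegrableOn g (Ioi 0) := by
    refine (integrable_indicator_iff measurableSet_Ioc).mpr (IntegrableOn.mono_measure ?_
      Measure.restrict_le_self)
    have := intervalIntegral.intervalIntegrable_rpow' (a := 0) (b := X₀) hγ
    rw [intervalIntegrable_iff_integrableOn_Ioc_of_le hX₀] at this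
    exact (integrableOn_const measure_Ioc_lt_top.ne).add (this.const_mul ρ)
  refine ⟨∫ x in Ioi 0, g x, fun σ hσ => ?_⟩
  have hσ1 : 0 < σ - 1 := sub_pos.mpr hσ
  have hmain := (integrableOn_rpow_mul_exp_neg_mul hγ hσ1).const_mul ρ
  have htail := (integrableOn_rpow_mul_exp_neg_mul hβ hσ1).const_mul C
  rw [← integral_rpow_mul_exp_neg_mul hγ hσ1, ← integral_rpow_mul_exp_neg_mul hβ hσ1,
    ← integral_const_mul, ← integral_const_mul, ← integral_sub
      (S.integrableOn_primeCount_mul_exp hbd hγ hβ hρ hC hσ) hmain, ← integral_add hint htail,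
    ← norm_eq_abs]
  refine norm_integral_le_of_norm_le (hint.add htail) ?_
  filter_upwards [ae_restrict_mem measurableSet_Ioi] with x (hx : 0 < x)
  have hexp : exp (-(σ - 1) * x) = exp x * exp (-σ * x) := by rw [← exp_add]; ring_nf
  have hπ : (0 : ℝ) ≤ primeCount S x := Nat.cast_nonneg _
  rw [norm_eq_abs]
  rcases le_or_gt x X₀ with hxX | hxX
  · have hπX : (primeCount S x : ℝ) * exp (-σ * x) ≤ primeCount S X₀ :=
      (mul_le_of_le_one_right hπ (exp_le_one_iff.mpr (by nlinarith))).trans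
        (S.primeCount_mono hxX)
    have hmainX : ρ * (x ^ γ * exp (-(σ - 1) * x)) ≤ ρ * x ^ γ := by
      gcongr
      exact mul_le_of_le_one_right (rpow_nonneg hx.le γ) (exp_le_one_iff.mpr (by nlinarith))
    have : 0 ≤ C * (x ^ β * exp (-(σ - 1) * x)) := by positivity
    rw [hg, indicator_of_mem (show x ∈ Ioc 0 X₀ from ⟨hx, hxX⟩)]
    exact abs_sub_le_of_nonneg_of_le (by positivity) (by linarith [mul_nonneg hρ (rpow_nonneg hx.le γ)])
      (by positivity) (by linarith)
  · rw [hg, indicator_of_notMem (show x ∉ Ioc 0 X₀ from fun hx' => hxX.not_ge hx'.2), zero_add]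
    calc |(primeCount S x : ℝ) * exp (-σ * x) - ρ * (x ^ γ * exp (-(σ - 1) * x))|
        = |(primeCount S x : ℝ) - ρ * x ^ γ * exp x| * exp (-σ * x) := by
          rw [hexp, ← abs_of_pos (exp_pos (-σ * x)), ← abs_mul, abs_of_pos (exp_pos _)]
          ring_nf
      _ ≤ C * x ^ β * exp x * exp (-σ * x) := by gcongr; exact hbd x hxX.le
      _ = C * (x ^ β * exp (-(σ - 1) * x)) := by rw [hexp]; ring

end PrimeCountBound

lemma isLittleO_primeZeta_sub {ρ γ β C X₀ : ℝ} (hγ : -1 < γ) (hβ : -1 < β) (hβγ : β < γ)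
    (hρ : 0 ≤ ρ) (hC : 0 ≤ C) (hX₀ : 0 ≤ X₀)
    (hbd : ∀ x, X₀ ≤ x → |(primeCount S x : ℝ) - ρ * x ^ γ * exp x| ≤ C * x ^ β * exp x) :
    (fun σ => S.primeZeta σ - ρ * Gamma (1 + γ) * (σ - 1) ^ (-1 - γ)) =o[𝓝[>] 1]
      fun σ => (σ - 1) ^ (-1 - γ) := by
  obtain ⟨K, hK⟩ := S.exists_abs_integral_sub_le hbd hγ hβ hρ hC hX₀
  set I := fun σ => ∫ x in Ioi 0, (primeCount S x : ℝ) * exp (-σ * x)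
  set L := fun σ : ℝ => ρ * Gamma (1 + γ) * (σ - 1) ^ (-1 - γ)
  have hzeta : ∀ σ, 1 < σ → S.primeZeta σ - L σ = σ * (I σ - L σ) + (σ - 1) * L σ := by
    intro σ hσ
    rw [primeZeta, (S.hasSum_exp_deg (by linarith)
      (S.integrableOn_primeCount_mul_exp hbd hγ hβ hρ hC hσ)).tsum_eq]
    ring
  have hIL : (fun σ => I σ - L σ) =o[𝓝[>] 1] fun σ => (σ - 1) ^ (-1 - γ) := by
    have hbound : (fun σ => I σ - L σ) =O[𝓝[>] 1]
        fun σ => K + C * Gamma (1 + β) * (σ - 1) ^ (-1 - β) := by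
      refine IsBigO.of_bound' ?_
      filter_upwards [self_mem_nhdsWithin] with σ (hσ : 1 < σ)
      simpa only [L, norm_eq_abs, mul_assoc] using (hK σ hσ).trans (le_abs_self _)
    refine hbound.trans_isLittleO (IsLittleO.add ?_ ?_)
    · simpa using (isLittleO_sub_one_rpow (show -1 - γ < 0 by linarith)).const_mul_left K
    · exact (isLittleO_sub_one_rpow (by linarith)).const_mul_left _
  have hσ : (fun σ : ℝ => σ) =O[𝓝[>] 1] fun _ => (1 : ℝ) :=
    (tendsto_nhdsWithin_of_tendsto_nhds tendsto_id).isBigO_one ℝ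
  have hσ1 : (fun σ : ℝ => σ - 1) =o[𝓝[>] 1] fun _ => (1 : ℝ) :=
    (isLittleO_one_iff ℝ).mpr (tendsto_nhdsWithin_of_tendsto_nhds
      ((continuous_sub_right (1 : ℝ)).tendsto' 1 0 (sub_self 1)))
  refine ((hσ.mul_isLittleO hIL).add (hσ1.mul_isBigO
      ((isBigO_refl _ _).const_mul_left (ρ * Gamma (1 + γ))))).congr' ?_ ?_
  · filter_upwards [self_mem_nhdsWithin] with σ hσ
    exact (hzeta σ hσ).symm
  · exact Eventually.of_forall fun σ => one_mul _

end ArithSemigroup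

lemma PrimeAsymp.mono {M : Type} [CommMonoid M] {S : ArithSemigroup M} {ρ γ δ δ' : ℝ}
    (h : PrimeAsymp S ρ γ δ) (hδ : δ' ≤ δ) : PrimeAsymp S ρ γ δ' := by
  refine IsBigO.trans h (IsBigO.of_bound' ?_)
  filter_upwards [eventually_ge_atTop 1] with x hx
  rw [norm_mul, norm_mul, norm_of_nonneg (exp_pos x).le,
    norm_of_nonneg (rpow_nonneg (by linarith) _), norm_of_nonneg (rpow_nonneg (by linarith) _)]
  gcongr

lemma PrimeAsymp.exists_bound {M : Type} [CommMonoid M] {S : ArithSemigroup M} {ρ γ δ : ℝ}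
    (h : PrimeAsymp S ρ γ δ) : ∃ C X₀, 0 ≤ C ∧ 0 ≤ X₀ ∧ ∀ x, X₀ ≤ x →
      |(primeCount S x : ℝ) - ρ * x ^ γ * exp x| ≤ C * x ^ (γ - δ) * exp x := by
  obtain ⟨C, hC, hCbd⟩ := h.exists_nonneg
  obtain ⟨X, hX⟩ := eventually_atTop.mp hCbd.bound
  refine ⟨C, max X 0, hC, le_max_right _ _, fun x hx => ?_⟩
  have hx0 : 0 ≤ x := (le_max_right _ _).trans hx
  simpa only [norm_eq_abs, abs_mul, abs_of_nonneg (rpow_nonneg hx0 _),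
    abs_of_nonneg (exp_pos x).le, mul_assoc] using hX x ((le_max_left _ _).trans hx)

theorem stmt4_general {M : Type} [CommMonoid M] (S : ArithSemigroup M)
    (ρ γ δ : ℝ) (hρ : 0 < ρ) (hγ : -1 < γ) (hδ0 : 0 < δ)
    (hasymp : PrimeAsymp S ρ γ δ) (k : ℕ) (hk : 2 ≤ k) :
    (fun σ : ℝ => Real.log (zetaPF S k σ) -
        ρ * Real.Gamma (1 + γ) * (σ - 1) ^ (-1 - γ))
      =o[nhdsWithin 1 (Set.Ioi 1)]
      (fun σ : ℝ => ρ * Real.Gamma (1 + γ) * (σ - 1) ^ (-1 - γ)) := by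
  obtain ⟨δ', hδ'0, hδ'γ, hasymp'⟩ : ∃ δ', 0 < δ' ∧ δ' < 1 + γ ∧ PrimeAsymp S ρ γ δ' :=
    ⟨min δ ((1 + γ) / 2), lt_min hδ0 (by linarith),
      (min_le_right _ _).trans_lt (by linarith), hasymp.mono (min_le_left _ _)⟩
  obtain ⟨C, X₀, hC, hX₀, hbd⟩ := hasymp'.exists_bound
  have hβ : -1 < γ - δ' := by linarith
  have hlog := S.isBigO_log_zetaPF_sub_primeZeta hk fun σ hσ =>
    (S.hasSum_exp_deg (by linarith)
      (S.integrableOn_primeCount_mul_exp hbd hγ hβ hρ.le hC hσ)).summable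
  have hzeta := S.isLittleO_primeZeta_sub hγ hβ (by linarith) hρ.le hC hX₀ hbd
  have hone : (fun _ => (1 : ℝ)) =o[𝓝[>] 1] fun σ : ℝ => (σ - 1) ^ (-1 - γ) := by
    simpa using isLittleO_sub_one_rpow (show -1 - γ < 0 by linarith)
  rw [isLittleO_const_mul_right_iff (mul_pos hρ (Gamma_pos_of_pos (by linarith))).ne']
  exact ((hlog.trans_isLittleO hone).add hzeta).congr_left fun σ => by ring

/-- `ln ζ_{G_k}(σ) = ρ Γ(1+γ) (σ−1)^{−1−γ} (1 + o(1))` as `σ ↓ 1`. -/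
theorem stmt4 {M : Type} [CommMonoid M] (S : ArithSemigroup M)
    (ρ γ δ : ℝ) (hρ : 0 < ρ) (hγ : -1 < γ) (hδ0 : 0 < δ) (hδ1 : δ ≤ 1)
    (hasymp : PrimeAsymp S ρ γ δ) (k : ℕ) (hk : 2 ≤ k) :
    (fun σ : ℝ => Real.log (zetaPF S k σ) -
        ρ * Real.Gamma (1 + γ) * (σ - 1) ^ (-1 - γ))
      =o[nhdsWithin 1 (Set.Ioi 1)]
      (fun σ : ℝ => ρ * Real.Gamma (1 + γ) * (σ - 1) ^ (-1 - γ)) :=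
  stmt4_general S ρ γ δ hρ hγ hδ0 hasymp k hk
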